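/- Let M and N be von Neumann algebras. Suppose there exist a central projection q of N and a Jordan *-isomorphism from M onto the corner Nq := {xq : x ∈ N}, and a central projection p of M and a Jordan *-isomorphism from N onto the corner Mp := {xp : x ∈ M}. Then there exists a Jordan *-isomorphism from M onto N. -/

import Mathlib

/-!
Composing the two maps gives a Jordan `*`-isomorphism `θ = Ψ ∘ Φ` of `M` onto the corner `M r`,
where `r = Ψ q` is a central projection below `p`. A Jordan `*`-isomorphism between corners maps
central projections to central projections and is multiplicative against them, so the
Schröder–Bernstein argument runs in the complete lattice of central projections of `M`: the chain
`1 ≥ p ≥ θ 1 ≥ θ p ≥ θ² 1 ≥ ⋯` has differences `f n` with `θ (f n) = f (n + 2)`. For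
`g = ⨆ₖ f (2k)` one gets `θ g = ⨆ₖ f (2k + 2)` and `θ g + (1 - g) = p`, so `θ` on `M g` together
with the identity on `M (1 - g)` maps `M` onto `M p`; composing with `Ψ⁻¹ : M p → N` finishes.
-/

variable {H : Type*} [NormedAddCommGroup H] [InnerProductSpace ℂ H] [CompleteSpace H]

/-- `p` is a projection in the von Neumann algebra `M`: `p ∈ M`, `p = p*`, `p = p²`. -/
def IsProjectionIn (M : VonNeumannAlgebra H) (p : H →L[ℂ] H) : Prop :=
  p ∈ M ∧ star p = p ∧ p * p = p

/-- `r` is a central projection of `M`. -/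
def IsCentralProjection (M : VonNeumannAlgebra H) (r : H →L[ℂ] H) : Prop :=
  IsProjectionIn M r ∧ ∀ x ∈ M, r * x = x * r

/-- `q` is unitarily equivalent to `p` by a unitary of `M`. -/
def UnitarilyEquivIn (M : VonNeumannAlgebra H) (p q : H →L[ℂ] H) : Prop :=
  ∃ u ∈ M, star u * u = 1 ∧ u * star u = 1 ∧ q = u * p * star u

/-- `P` is the Grassmann space of some projection of `M`. -/
def IsGrassmannSpace (M : VonNeumannAlgebra H) (P : Set (H →L[ℂ] H)) : Prop :=
  ∃ p, IsProjectionIn M p ∧ P = {q | UnitarilyEquivIn M p q}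

/-- `P` is a proper Grassmann space in `M`. -/
def IsProperGrassmannSpace (M : VonNeumannAlgebra H) (P : Set (H →L[ℂ] H)) : Prop :=
  IsGrassmannSpace M P ∧
    ∀ p ∈ P, ∀ z, IsCentralProjection M z →
      (z * p = p → z = 1) ∧ (z * (1 - p) = 1 - p → z = 1)

/-- `J` restricts to a Jordan `*`-isomorphism from the set `S` onto the set `S'`. -/
def IsJordanStarIsoOn {A B : Type*} [Ring A] [Ring B] [Module ℂ A] [Module ℂ B]
    [Star A] [Star B] (S : Set A) (S' : Set B) (J : A → B) : Prop :=
  Set.BijOn J S S' ∧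
  (∀ x ∈ S, ∀ y ∈ S, J (x + y) = J x + J y) ∧
  (∀ (c : ℂ), ∀ x ∈ S, J (c • x) = c • J x) ∧
  (∀ x ∈ S, J (star x) = star (J x)) ∧
  (∀ x ∈ S, ∀ y ∈ S, J (x * y + y * x) = J x * J y + J y * J x)
lemma eq_of_add_self_eq_add_self {V : Type*} [AddCommGroup V] [Module ℂ V] {a b : V}
    (h : a + a = b + b) : a = b := by
  rw [← two_smul ℂ a, ← two_smul ℂ b] at h
  exact smul_right_injective V two_ne_zero h

lemma mul_eq_self_of_add_self_eq {R : Type*} [Ring R] [Module ℂ R] {ρ b : R}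
    (hρ : ρ * ρ = ρ) (h : b + b = ρ * b + b * ρ) : ρ * b = b ∧ b * ρ = b := by
  have hl : ρ * b = ρ * b * ρ := by
    have := congrArg (ρ * ·) h
    simp only [mul_add, ← mul_assoc, hρ] at this
    exact add_left_cancel this
  have hr : b * ρ = ρ * b * ρ := by
    have := congrArg (· * ρ) h
    simp only [add_mul, mul_assoc, hρ] at this
    rw [mul_assoc]
    exact add_right_cancel this
  have hb : b = ρ * b := eq_of_add_self_eq_add_self (by rw [h, hr, ← hl])
  exact ⟨hb.symm, by rw [hr, ← hl, ← hb]⟩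

lemma mul_eq_of_add_self_eq {R : Type*} [Ring R] [Module ℂ R] {ρ a b : R} (hρ : ρ * ρ = ρ)
    (hl : ρ * b = b) (hr : b * ρ = b) (h : b + b = ρ * a + a * ρ) : ρ * a = b ∧ a * ρ = b := by
  have hla : a * ρ = ρ * a * ρ := by
    have := congrArg (ρ * ·) h
    simp only [mul_add, ← mul_assoc, hρ, hl] at this
    exact add_left_cancel (h.symm.trans this)
  have hra : ρ * a = ρ * a * ρ := by
    have := congrArg (· * ρ) h
    simp only [add_mul, mul_assoc, hρ, hr] at this
    rw [mul_assoc]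
    exact add_right_cancel (h.symm.trans this)
  have hb : b = ρ * a := eq_of_add_self_eq_add_self (by rw [h, hla, ← hra])
  exact ⟨hb.symm, by rw [hla, ← hra, ← hb]⟩

lemma mul_add_mul_add_of_mul_eq_zero {R : Type*} [Ring R] {a b c d : R} (had : a * d = 0)
    (hda : d * a = 0) (hcb : c * b = 0) (hbc : b * c = 0) :
    (a + b) * (c + d) + (c + d) * (a + b) = (a * c + c * a) + (b * d + d * b) := by
  simp only [mul_add, add_mul, had, hda, hcb, hbc]
  abel

namespace IsJordanStarIsoOn

variable {A B C : Type*} [Ring A] [Ring B] [Ring C] [Module ℂ A] [Module ℂ B] [Module ℂ C]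
  [Star A] [Star B] [Star C]
variable {S : Set A} {T : Set B} {U : Set C} {J : A → B}

lemma comp {K : B → C} (hJ : IsJordanStarIsoOn S T J) (hK : IsJordanStarIsoOn T U K) :
    IsJordanStarIsoOn S U (K ∘ J) := by
  obtain ⟨hbij, hadd, hsmul, hstar, hjordan⟩ := hJ
  obtain ⟨hbij', hadd', hsmul', hstar', hjordan'⟩ := hK
  have hT := hbij.mapsTo
  refine ⟨hbij'.comp hbij, fun x hx y hy => ?_, fun c x hx => ?_, fun x hx => ?_,
    fun x hx y hy => ?_⟩
  · simp only [Function.comp_apply, hadd x hx y hy, hadd' _ (hT hx) _ (hT hy)]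
  · simp only [Function.comp_apply, hsmul c x hx, hsmul' c _ (hT hx)]
  · simp only [Function.comp_apply, hstar x hx, hstar' _ (hT hx)]
  · simp only [Function.comp_apply, hjordan x hx y hy, hjordan' _ (hT hx) _ (hT hy)]

lemma invFunOn (hJ : IsJordanStarIsoOn S T J) (hS_add : ∀ x ∈ S, ∀ y ∈ S, x + y ∈ S)
    (hS_smul : ∀ (c : ℂ), ∀ x ∈ S, c • x ∈ S) (hS_star : ∀ x ∈ S, star x ∈ S)
    (hS_jordan : ∀ x ∈ S, ∀ y ∈ S, x * y + y * x ∈ S) :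
    IsJordanStarIsoOn T S (Function.invFunOn J S) := by
  obtain ⟨hbij, hadd, hsmul, hstar, hjordan⟩ := hJ
  have hinv : Set.InvOn (Function.invFunOn J S) J S T := hbij.invOn_invFunOn
  have hmaps : Set.MapsTo (Function.invFunOn J S) T S := fun y hy =>
    Function.invFunOn_mem (hbij.surjOn hy)
  set J' := Function.invFunOn J S
  have hJJ' : ∀ y ∈ T, J (J' y) = y := fun y hy => hinv.2 hy
  refine ⟨hbij.symm hinv.symm, fun x hx y hy => ?_, fun c x hx => ?_, fun x hx => ?_,
    fun x hx y hy => ?_⟩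
  · rw [← hJJ' x hx, ← hJJ' y hy, ← hadd _ (hmaps hx) _ (hmaps hy),
      hinv.1 (hS_add _ (hmaps hx) _ (hmaps hy)), hJJ' x hx, hJJ' y hy]
  · rw [← hJJ' x hx, ← hsmul c _ (hmaps hx), hinv.1 (hS_smul c _ (hmaps hx)), hJJ' x hx]
  · rw [← hJJ' x hx, ← hstar _ (hmaps hx), hinv.1 (hS_star _ (hmaps hx)), hJJ' x hx]
  · rw [← hJJ' x hx, ← hJJ' y hy, ← hjordan _ (hmaps hx) _ (hmaps hy),
      hinv.1 (hS_jordan _ (hmaps hx) _ (hmaps hy)), hJJ' x hx, hJJ' y hy]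

lemma id : IsJordanStarIsoOn S S (id : A → A) :=
  ⟨Set.bijOn_id S, fun _ _ _ _ => rfl, fun _ _ _ => rfl, fun _ _ => rfl, fun _ _ _ _ => rfl⟩

lemma map_sub (hJ : IsJordanStarIsoOn S T J) {x y : A} (hy : y ∈ S) (hxy : x - y ∈ S) :
    J (x - y) = J x - J y := by
  rw [eq_sub_iff_add_eq, ← hJ.2.1 _ hxy _ hy, sub_add_cancel]

lemma mono {S₀ : Set A} {T₀ : Set B} (hJ : IsJordanStarIsoOn S T J) (hS₀ : S₀ ⊆ S)
    (hbij : Set.BijOn J S₀ T₀) : IsJordanStarIsoOn S₀ T₀ J :=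
  ⟨hbij, fun x hx y hy => hJ.2.1 x (hS₀ hx) y (hS₀ hy), fun c x hx => hJ.2.2.1 c x (hS₀ hx),
    fun x hx => hJ.2.2.2.1 x (hS₀ hx), fun x hx y hy => hJ.2.2.2.2 x (hS₀ hx) y (hS₀ hy)⟩

lemma map_mul_of_central (hJ : IsJordanStarIsoOn S T J) {z : A} (hz : z ∈ S) (hzz : z * z = z)
    (hzS : ∀ x ∈ S, z * x = x * z ∧ z * x ∈ S) :
    J z * J z = J z ∧ ∀ x ∈ S, J (z * x) = J z * J x ∧ J z * J x = J x * J z := by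
  obtain ⟨-, hadd, -, -, hjordan⟩ := hJ
  have hρ : J z * J z = J z := by
    have := hjordan z hz z hz
    rw [hzz, hadd z hz z hz] at this
    exact (eq_of_add_self_eq_add_self this).symm
  refine ⟨hρ, fun x hx => ?_⟩
  obtain ⟨hcomm, hzx⟩ := hzS x hx
  have hb : J (z * x) + J (z * x) = J z * J (z * x) + J (z * x) * J z := by
    have := hjordan z hz (z * x) hzx
    rwa [← mul_assoc, hzz, mul_assoc, ← hcomm, ← mul_assoc, hzz, hadd _ hzx _ hzx] at this
  have ha : J (z * x) + J (z * x) = J z * J x + J x * J z := by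
    have := hjordan z hz x hx
    rwa [← hcomm, hadd _ hzx _ hzx] at this
  obtain ⟨hl, hr⟩ := mul_eq_self_of_add_self_eq hρ hb
  obtain ⟨hla, hra⟩ := mul_eq_of_add_self_eq hρ hl hr ha
  exact ⟨hla.symm, hla.trans hra.symm⟩

end IsJordanStarIsoOn

namespace IsCentralProjection

variable {M : VonNeumannAlgebra H} {r s : H →L[ℂ] H}

lemma mem (hr : IsCentralProjection M r) : r ∈ M := hr.1.1

lemma star_eq (hr : IsCentralProjection M r) : star r = r := hr.1.2.1

lemma mul_self (hr : IsCentralProjection M r) : r * r = r := hr.1.2.2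

lemma mul_comm (hr : IsCentralProjection M r) {x : H →L[ℂ] H} (hx : x ∈ M) : r * x = x * r :=
  hr.2 x hx

lemma one : IsCentralProjection M 1 :=
  ⟨⟨one_mem M, star_one _, one_mul 1⟩, fun x _ => by rw [one_mul, mul_one]⟩

lemma sub (hr : IsCentralProjection M r) (hs : IsCentralProjection M s) (hsr : s * r = s) :
    IsCentralProjection M (r - s) := by
  have hrs : r * s = s := (hr.mul_comm hs.mem).trans hsr
  refine ⟨⟨sub_mem hr.mem hs.mem, by rw [star_sub, hr.star_eq, hs.star_eq], ?_⟩, fun x hx => ?_⟩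
  · simp only [sub_mul, mul_sub, hr.mul_self, hs.mul_self, hrs, hsr]
    abel
  · rw [sub_mul, mul_sub, hr.mul_comm hx, hs.mul_comm hx]

lemma add (hr : IsCentralProjection M r) (hs : IsCentralProjection M s) (hrs : r * s = 0) :
    IsCentralProjection M (r + s) := by
  have hsr : s * r = 0 := (hs.mul_comm hr.mem).trans hrs
  refine ⟨⟨add_mem hr.mem hs.mem, by rw [star_add, hr.star_eq, hs.star_eq], ?_⟩, fun x hx => ?_⟩
  · simp only [add_mul, mul_add, hr.mul_self, hs.mul_self, hrs, hsr, add_zero, zero_add]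
  · rw [add_mul, mul_add, hr.mul_comm hx, hs.mul_comm hx]

lemma mul_mul_mul_self (hr : IsCentralProjection M r) (x : H →L[ℂ] H) {y : H →L[ℂ] H}
    (hy : y ∈ M) : x * r * (y * r) = x * y * r := by
  rw [mul_assoc x, ← mul_assoc r, hr.mul_comm hy, mul_assoc y, hr.mul_self, mul_assoc]

lemma star_mul_self (hr : IsCentralProjection M r) {x : H →L[ℂ] H} (hx : x ∈ M) :
    star (x * r) = star x * r := by
  rw [star_mul, hr.star_eq, hr.mul_comm (star_mem hx)]

end IsCentralProjection

def corner (M : VonNeumannAlgebra H) (r : H →L[ℂ] H) : Set (H →L[ℂ] H) :=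
  {y | ∃ x ∈ M, y = x * r}

section Corner

variable {M : VonNeumannAlgebra H} {r s : H →L[ℂ] H}

lemma corner_one : corner M 1 = {x | x ∈ M} := by
  ext y
  simp [corner]

lemma mem_corner_one {x : H →L[ℂ] H} (hx : x ∈ M) : x ∈ corner M 1 := ⟨x, hx, (mul_one x).symm⟩

lemma mem_corner_iff (hr : IsCentralProjection M r) {y : H →L[ℂ] H} :
    y ∈ corner M r ↔ y ∈ M ∧ y * r = y := by
  constructor
  · rintro ⟨x, hx, rfl⟩
    exact ⟨mul_mem hx hr.mem, by rw [mul_assoc, hr.mul_self]⟩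
  · rintro ⟨hy, hyr⟩
    exact ⟨y, hy, hyr.symm⟩

lemma mul_mem_corner {x : H →L[ℂ] H} (hx : x ∈ M) : x * r ∈ corner M r := ⟨x, hx, rfl⟩

lemma IsCentralProjection.mem_corner (hr : IsCentralProjection M r) : r ∈ corner M r :=
  (mem_corner_iff hr).2 ⟨hr.mem, hr.mul_self⟩

lemma corner_subset (hr : IsCentralProjection M r) (hs : IsCentralProjection M s)
    (hsr : s * r = s) : corner M s ⊆ corner M r := by
  rintro y ⟨x, hx, rfl⟩
  exact (mem_corner_iff hr).2 ⟨mul_mem hx hs.mem, by rw [mul_assoc, hsr]⟩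

lemma mul_eq_zero_of_mem_corner (hr : IsCentralProjection M r) (hrs : r * s = 0)
    {x y : H →L[ℂ] H} (hx : x ∈ corner M r) (hy : y ∈ corner M s) : x * y = 0 := by
  obtain ⟨x, -, rfl⟩ := hx
  obtain ⟨y, hy, rfl⟩ := hy
  rw [mul_assoc, ← mul_assoc r, hr.mul_comm hy, mul_assoc, hrs, mul_zero, mul_zero]

end Corner

section CornerMaps

variable {K : Type*} [NormedAddCommGroup K] [InnerProductSpace ℂ K] [CompleteSpace K]
  {M : VonNeumannAlgebra H} {N : VonNeumannAlgebra K} {r s z : H →L[ℂ] H} {r' s' : K →L[ℂ] K}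

lemma IsJordanStarIsoOn.invFunOn_corner {B : Type*} [Ring B] [Module ℂ B] [Star B] {T : Set B}
    {J : (H →L[ℂ] H) → B} (hr : IsCentralProjection M r)
    (hJ : IsJordanStarIsoOn (corner M r) T J) :
    IsJordanStarIsoOn T (corner M r) (Function.invFunOn J (corner M r)) := by
  refine hJ.invFunOn (fun x hx y hy => ?_) (fun c x hx => ?_) (fun x hx => ?_)
    (fun x hx y hy => ?_) <;> simp only [mem_corner_iff hr] at *
  · exact ⟨add_mem hx.1 hy.1, by rw [add_mul, hx.2, hy.2]⟩
  · exact ⟨M.smul_mem hx.1 c, by rw [smul_mul_assoc, hx.2]⟩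
  · exact ⟨star_mem hx.1, by rw [← hr.star_eq, ← star_mul, hr.mul_comm hx.1, hx.2]⟩
  · exact ⟨add_mem (mul_mem hx.1 hy.1) (mul_mem hy.1 hx.1),
      by rw [add_mul, mul_assoc, mul_assoc, hx.2, hy.2]⟩

lemma IsJordanStarIsoOn.isCentralProjection_map {J : (H →L[ℂ] H) → (K →L[ℂ] K)}
    (hJ : IsJordanStarIsoOn (corner M r) (corner N r') J) (hr : IsCentralProjection M r)
    (hr' : IsCentralProjection N r') (hz : IsCentralProjection M z) (hzr : z * r = z) :
    IsCentralProjection N (J z) ∧ J z * r' = J z ∧ ∀ x ∈ corner M r, J (x * z) = J x * J z := by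
  have hzS : z ∈ corner M r := (mem_corner_iff hr).2 ⟨hz.mem, hzr⟩
  obtain ⟨hidem, hmul⟩ := hJ.map_mul_of_central hzS hz.mul_self fun x hx => by
    obtain ⟨hxM, hxr⟩ := (mem_corner_iff hr).1 hx
    exact ⟨hz.mul_comm hxM, (mem_corner_iff hr).2 ⟨mul_mem hz.mem hxM, by rw [mul_assoc, hxr]⟩⟩
  obtain ⟨hJzN, hJzr'⟩ := (mem_corner_iff hr').1 (hJ.1.mapsTo hzS)
  have hstar : star (J z) = J z := by rw [← hJ.2.2.2.1 z hzS, hz.star_eq]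
  have hcomm : ∀ y ∈ N, J z * y = y * J z := by
    intro y hy
    obtain ⟨x, hx, hJx⟩ := hJ.1.surjOn (mul_mem_corner hy : y * r' ∈ corner N r')
    calc J z * y = J z * (y * r') := by rw [← hr'.mul_comm hy, ← mul_assoc, hJzr']
      _ = y * r' * J z := by rw [← hJx, (hmul x hx).2]
      _ = y * J z := by rw [mul_assoc, hr'.mul_comm hJzN, hJzr']
  refine ⟨⟨⟨hJzN, hstar, hidem⟩, hcomm⟩, hJzr', fun x hx => ?_⟩
  rw [← hz.mul_comm ((mem_corner_iff hr).1 hx).1, (hmul x hx).1, (hmul x hx).2]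

lemma IsJordanStarIsoOn.isCentralProjection_map_one {J : (H →L[ℂ] H) → (K →L[ℂ] K)}
    (hJ : IsJordanStarIsoOn (corner M 1) (corner N r') J) (hr' : IsCentralProjection N r')
    (hz : IsCentralProjection M z) :
    IsCentralProjection N (J z) ∧ J z * r' = J z ∧ ∀ x ∈ M, J (x * z) = J x * J z :=
  let h := hJ.isCentralProjection_map IsCentralProjection.one hr' hz (mul_one z)
  ⟨h.1, h.2.1, fun x hx => h.2.2 x (mem_corner_one hx)⟩

lemma IsJordanStarIsoOn.restrict_corner {J : (H →L[ℂ] H) → (K →L[ℂ] K)}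
    (hJ : IsJordanStarIsoOn (corner M r) (corner N r') J) (hr : IsCentralProjection M r)
    (hr' : IsCentralProjection N r') (hz : IsCentralProjection M z) (hzr : z * r = z) :
    IsJordanStarIsoOn (corner M z) (corner N (J z)) J := by
  obtain ⟨hJz, hJzr', hmul⟩ := hJ.isCentralProjection_map hr hr' hz hzr
  have hsub := corner_subset hr hz hzr
  refine hJ.mono hsub ⟨fun x hx => ?_, hJ.1.injOn.mono hsub, fun y hy => ?_⟩
  · have hxr := hsub hx
    rw [mem_corner_iff hJz, ← hmul x hxr, ((mem_corner_iff hz).1 hx).2]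
    exact ⟨((mem_corner_iff hr').1 (hJ.1.mapsTo hxr)).1, rfl⟩
  · obtain ⟨x, hx, rfl⟩ := hJ.1.surjOn (corner_subset hr' hJz hJzr' hy)
    refine ⟨x * z, mul_mem_corner ((mem_corner_iff hr).1 hx).1, ?_⟩
    rw [hmul x hx, ((mem_corner_iff hJz).1 hy).2]

lemma bijOn_corner_add {J₁ J₂ : (H →L[ℂ] H) → (K →L[ℂ] K)}
    (hJ₁ : Set.BijOn J₁ (corner M r) (corner N r'))
    (hJ₂ : Set.BijOn J₂ (corner M s) (corner N s'))
    (hr : IsCentralProjection M r) (hs : IsCentralProjection M s)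
    (hr' : IsCentralProjection N r') (hs' : IsCentralProjection N s')
    (hrs : r * s = 0) (hrs' : r' * s' = 0) :
    Set.BijOn (fun x => J₁ (x * r) + J₂ (x * s)) (corner M (r + s)) (corner N (r' + s')) := by
  have hsr : s * r = 0 := (hs.mul_comm hr.mem).trans hrs
  have hsr' : s' * r' = 0 := (hs'.mul_comm hr'.mem).trans hrs'
  have h₁ : ∀ x ∈ M, J₁ (x * r) ∈ corner N r' := fun x hx => hJ₁.mapsTo (mul_mem_corner hx)
  have h₂ : ∀ x ∈ M, J₂ (x * s) ∈ corner N s' := fun x hx => hJ₂.mapsTo (mul_mem_corner hx)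
  have hproj₁ : ∀ x ∈ M, (J₁ (x * r) + J₂ (x * s)) * r' = J₁ (x * r) := fun x hx => by
    rw [add_mul, ((mem_corner_iff hr').1 (h₁ x hx)).2,
      mul_eq_zero_of_mem_corner hs' hsr' (h₂ x hx) hr'.mem_corner, add_zero]
  have hproj₂ : ∀ x ∈ M, (J₁ (x * r) + J₂ (x * s)) * s' = J₂ (x * s) := fun x hx => by
    rw [add_mul, ((mem_corner_iff hs').1 (h₂ x hx)).2,
      mul_eq_zero_of_mem_corner hr' hrs' (h₁ x hx) hs'.mem_corner, zero_add]
  have hrs_mem := fun {x} => mem_corner_iff (hr.add hs hrs) (y := x)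
  refine ⟨fun x hx => ?_, fun x hx y hy hxy => ?_, fun y hy => ?_⟩
  · have hxM := (hrs_mem.1 hx).1
    refine (mem_corner_iff (hr'.add hs' hrs')).2
      ⟨add_mem ((mem_corner_iff hr').1 (h₁ x hxM)).1 ((mem_corner_iff hs').1 (h₂ x hxM)).1, ?_⟩
    rw [mul_add, hproj₁ x hxM, hproj₂ x hxM]
  · obtain ⟨hxM, hx⟩ := hrs_mem.1 hx
    obtain ⟨hyM, hy⟩ := hrs_mem.1 hy
    have hxr : x * r = y * r := hJ₁.injOn (mul_mem_corner hxM) (mul_mem_corner hyM)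
      (by rw [← hproj₁ x hxM, ← hproj₁ y hyM]; exact congrArg (· * r') hxy)
    have hxs : x * s = y * s := hJ₂.injOn (mul_mem_corner hxM) (mul_mem_corner hyM)
      (by rw [← hproj₂ x hxM, ← hproj₂ y hyM]; exact congrArg (· * s') hxy)
    rw [← hx, ← hy, mul_add, mul_add, hxr, hxs]
  · obtain ⟨hyN, hy'⟩ := (mem_corner_iff (hr'.add hs' hrs')).1 hy
    obtain ⟨u, hu, hJu⟩ := hJ₁.surjOn (mul_mem_corner hyN : y * r' ∈ corner N r')
    obtain ⟨v, hv, hJv⟩ := hJ₂.surjOn (mul_mem_corner hyN : y * s' ∈ corner N s')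
    obtain ⟨huM, hur⟩ := (mem_corner_iff hr).1 hu
    obtain ⟨hvM, hvs⟩ := (mem_corner_iff hs).1 hv
    have hxr : (u + v) * r = u := by
      rw [add_mul, hur, mul_eq_zero_of_mem_corner hs hsr hv hr.mem_corner, add_zero]
    have hxs : (u + v) * s = v := by
      rw [add_mul, hvs, mul_eq_zero_of_mem_corner hr hrs hu hs.mem_corner, zero_add]
    refine ⟨u + v, hrs_mem.2 ⟨add_mem huM hvM, by rw [mul_add, hxr, hxs]⟩, ?_⟩
    dsimp only
    rw [hxr, hxs, hJu, hJv, ← mul_add, hy']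

lemma IsJordanStarIsoOn.corner_add {J₁ J₂ : (H →L[ℂ] H) → (K →L[ℂ] K)}
    (hJ₁ : IsJordanStarIsoOn (corner M r) (corner N r') J₁)
    (hJ₂ : IsJordanStarIsoOn (corner M s) (corner N s') J₂)
    (hr : IsCentralProjection M r) (hs : IsCentralProjection M s)
    (hr' : IsCentralProjection N r') (hs' : IsCentralProjection N s')
    (hrs : r * s = 0) (hrs' : r' * s' = 0) :
    IsJordanStarIsoOn (corner M (r + s)) (corner N (r' + s'))
      (fun x => J₁ (x * r) + J₂ (x * s)) := by
  have hsr' : s' * r' = 0 := (hs'.mul_comm hr'.mem).trans hrs'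
  have h₁ : ∀ x ∈ M, J₁ (x * r) ∈ corner N r' := fun x hx => hJ₁.1.mapsTo (mul_mem_corner hx)
  have h₂ : ∀ x ∈ M, J₂ (x * s) ∈ corner N s' := fun x hx => hJ₂.1.mapsTo (mul_mem_corner hx)
  have hM : ∀ x ∈ corner M (r + s), x ∈ M := fun x hx =>
    ((mem_corner_iff (hr.add hs hrs)).1 hx).1
  refine ⟨bijOn_corner_add hJ₁.1 hJ₂.1 hr hs hr' hs' hrs hrs', fun x hx y hy => ?_,
    fun c x hx => ?_, fun x hx => ?_, fun x hx y hy => ?_⟩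
  · have hxM := hM x hx
    have hyM := hM y hy
    simp only [add_mul]
    rw [hJ₁.2.1 _ (mul_mem_corner hxM) _ (mul_mem_corner hyM),
      hJ₂.2.1 _ (mul_mem_corner hxM) _ (mul_mem_corner hyM)]
    abel
  · simp only [smul_mul_assoc, smul_add]
    rw [hJ₁.2.2.1 c _ (mul_mem_corner (hM x hx)), hJ₂.2.2.1 c _ (mul_mem_corner (hM x hx))]
  · dsimp only
    rw [← hr.star_mul_self (hM x hx), ← hs.star_mul_self (hM x hx),
      hJ₁.2.2.2.1 _ (mul_mem_corner (hM x hx)), hJ₂.2.2.2.1 _ (mul_mem_corner (hM x hx)),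
      star_add]
  · have hxM := hM x hx
    have hyM := hM y hy
    dsimp only
    rw [mul_add_mul_add_of_mul_eq_zero
      (mul_eq_zero_of_mem_corner hr' hrs' (h₁ x hxM) (h₂ y hyM))
      (mul_eq_zero_of_mem_corner hs' hsr' (h₂ y hyM) (h₁ x hxM))
      (mul_eq_zero_of_mem_corner hr' hrs' (h₁ y hyM) (h₂ x hxM))
      (mul_eq_zero_of_mem_corner hs' hsr' (h₂ x hxM) (h₁ y hyM)),
      ← hJ₁.2.2.2.2 _ (mul_mem_corner hxM) _ (mul_mem_corner hyM),
      ← hJ₂.2.2.2.2 _ (mul_mem_corner hxM) _ (mul_mem_corner hyM),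
      hr.mul_mul_mul_self x hyM, hr.mul_mul_mul_self y hxM,
      hs.mul_mul_mul_self x hyM, hs.mul_mul_mul_self y hxM, add_mul, add_mul]

end CornerMaps

lemma IsCentralProjection.exists_iSup {ι : Type*} {M : VonNeumannAlgebra H}
    {F : ι → H →L[ℂ] H} (hF : ∀ k, IsCentralProjection M (F k)) :
    ∃ G, IsCentralProjection M G ∧ (∀ k, G * F k = F k) ∧
      ∀ z : H →L[ℂ] H, (∀ k, z * F k = F k) → z * G = G := by
  set V := (⨆ k, (F k).range).topologicalClosure
  have : CompleteSpace V := (Submodule.isClosed_topologicalClosure _).completeSpace_coe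
  have hFV : ∀ k v, F k v ∈ V := fun k v =>
    Submodule.le_topologicalClosure _ (Submodule.mem_iSup_of_mem k ⟨v, rfl⟩)
  have hinv : ∀ y : H →L[ℂ] H, (∀ k, F k * y = y * F k) →
      V ∈ Module.End.invtSubmodule (y : H →ₗ[ℂ] H) := by
    intro y hy
    refine Submodule.topologicalClosure_mem_invtSubmodule ?_
    rw [Module.End.mem_invtSubmodule_iff_map_le, Submodule.map_iSup]
    refine iSup_mono fun k => ?_
    rintro _ ⟨_, ⟨v, rfl⟩, rfl⟩
    exact ⟨y v, congrArg (· v) (hy k)⟩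
  have hG := isStarProjection_starProjection (U := V)
  have hGM : V.starProjection ∈ M := by
    refine (VonNeumannAlgebra.IsStarProjection.mem_iff hG M).2 fun y hy => ?_
    rw [Submodule.range_starProjection]
    exact hinv y fun k => VonNeumannAlgebra.mem_commutant_iff.1 hy (F k) (hF k).mem
  have hGcomm : V.starProjection ∈ M.commutant := by
    refine (VonNeumannAlgebra.IsStarProjection.mem_iff hG M.commutant).2 fun y hy => ?_
    rw [VonNeumannAlgebra.commutant_commutant] at hy
    rw [Submodule.range_starProjection]
    exact hinv y fun k => (hF k).mul_comm hy
  refine ⟨V.starProjection, ⟨⟨hGM, hG.isSelfAdjoint.star_eq, hG.isIdempotentElem.eq⟩,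
    fun x hx => (VonNeumannAlgebra.mem_commutant_iff.1 hGcomm x hx).symm⟩, fun k => ?_,
    fun z hz => ?_⟩
  · ext v
    exact Submodule.starProjection_eq_self_iff.2 (hFV k v)
  · have hVz : V ≤ (z - 1).ker := by
      refine Submodule.topologicalClosure_minimal _ (iSup_le fun k => ?_) (z - 1).isClosed_ker
      rintro _ ⟨v, rfl⟩
      simpa [LinearMap.mem_ker, sub_eq_zero] using congrArg (· v) (hz k)
    ext v
    have := hVz (V.starProjection_apply_mem v)
    simpa [LinearMap.mem_ker, sub_eq_zero] using this

namespace IsJordanStarIsoOn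

variable {M : VonNeumannAlgebra H} {r : H →L[ℂ] H} {θ : (H →L[ℂ] H) → (H →L[ℂ] H)}

lemma map_eq_of_isSup {ι : Type*} (hθ : IsJordanStarIsoOn (corner M 1) (corner M r) θ)
    (hr : IsCentralProjection M r) {F : ι → H →L[ℂ] H} (hF : ∀ k, IsCentralProjection M (F k))
    {g G : H →L[ℂ] H} (hg : IsCentralProjection M g) (hgF : ∀ k, g * F k = F k)
    (hg_min : ∀ z, IsCentralProjection M z → (∀ k, z * F k = F k) → z * g = g)
    (hG : IsCentralProjection M G) (hGF : ∀ k, G * θ (F k) = θ (F k))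
    (hG_min : ∀ z, (∀ k, z * θ (F k) = θ (F k)) → z * G = G) :
    θ g = G := by
  have hmap := fun {z} (hz : IsCentralProjection M z) => hθ.isCentralProjection_map_one hr hz
  have hF1 : ∀ k, F k ∈ corner M 1 := fun k => mem_corner_one (hF k).mem
  have hGθg : θ g * G = G := hG_min (θ g) fun k => by
    rw [(hmap hg).1.mul_comm (hmap (hF k)).1.mem, ← (hmap hg).2.2 _ (hF k).mem,
      ← hg.mul_comm (hF k).mem, hgF]
  have hGr : G * r = G := by
    rw [hG.mul_comm hr.mem]
    exact hG_min r fun k => by rw [hr.mul_comm (hmap (hF k)).1.mem, (hmap (hF k)).2.1]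
  have hinv := hθ.1.invOn_invFunOn
  set θ' := Function.invFunOn θ (corner M 1)
  -- `θ' G` is a central projection above every `F k`, hence above `g`
  obtain ⟨hw, -, hw_mul⟩ := (hθ.invFunOn_corner IsCentralProjection.one).isCentralProjection_map
    hr IsCentralProjection.one hG hGr
  have hgw : g * θ' G = g := by
    rw [hg.mul_comm hw.mem]
    refine hg_min _ hw fun k => ?_
    rw [hw.mul_comm (hF k).mem, ← hinv.1 (hF1 k), ← hw_mul _ (hθ.1.mapsTo (hF1 k)),
      ← hG.mul_comm (hmap (hF k)).1.mem, hGF k]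
  calc θ g = θ (g * θ' G) := by rw [hgw]
    _ = θ g * θ (θ' G) := (hmap hw).2.2 g hg.mem
    _ = G := by rw [hinv.2 ((mem_corner_iff hr).2 ⟨hG.mem, hGr⟩), hGθg]

end IsJordanStarIsoOn

def schroederSeq {A : Type*} [One A] (θ : A → A) (p : A) : ℕ → A
  | 0 => 1
  | 1 => p
  | n + 2 => θ (schroederSeq θ p n)

def schroederDiff {A : Type*} [One A] [Sub A] (θ : A → A) (p : A) (n : ℕ) : A :=
  schroederSeq θ p n - schroederSeq θ p (n + 1)

section SchroederBernstein

variable {M : VonNeumannAlgebra H} {p r : H →L[ℂ] H} {θ : (H →L[ℂ] H) → (H →L[ℂ] H)}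

lemma IsJordanStarIsoOn.isCentralProjection_schroederSeq
    (hθ : IsJordanStarIsoOn (corner M 1) (corner M r) θ) (hr : IsCentralProjection M r)
    (hp : IsCentralProjection M p) : ∀ n, IsCentralProjection M (schroederSeq θ p n)
  | 0 => IsCentralProjection.one
  | 1 => hp
  | n + 2 => (hθ.isCentralProjection_map_one hr (hθ.isCentralProjection_schroederSeq hr hp n)).1

lemma IsJordanStarIsoOn.schroederSeq_succ_mul
    (hθ : IsJordanStarIsoOn (corner M 1) (corner M r) θ) (hr : IsCentralProjection M r)
    (hp : IsCentralProjection M p) (hrp : r * p = r) :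
    ∀ n, schroederSeq θ p (n + 1) * schroederSeq θ p n = schroederSeq θ p (n + 1)
  | 0 => mul_one p
  | 1 => by
    have hθ1 := (hθ.isCentralProjection_map_one hr IsCentralProjection.one).2.1
    change θ 1 * p = θ 1
    rw [← hθ1, mul_assoc, hrp]
  | n + 2 => by
    have he := hθ.isCentralProjection_schroederSeq hr hp n
    change θ _ * θ _ = θ _
    rw [← (hθ.isCentralProjection_map_one hr he).2.2 _
      (hθ.isCentralProjection_schroederSeq hr hp (n + 1)).mem,
      hθ.schroederSeq_succ_mul hr hp hrp n]

lemma IsJordanStarIsoOn.schroederSeq_mul_of_le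
    (hθ : IsJordanStarIsoOn (corner M 1) (corner M r) θ) (hr : IsCentralProjection M r)
    (hp : IsCentralProjection M p) (hrp : r * p = r) {n m : ℕ} (hnm : n ≤ m) :
    schroederSeq θ p m * schroederSeq θ p n = schroederSeq θ p m := by
  induction m, hnm using Nat.le_induction with
  | base => exact (hθ.isCentralProjection_schroederSeq hr hp n).mul_self
  | succ m _ ih =>
    have hsucc := hθ.schroederSeq_succ_mul hr hp hrp m
    calc _ = schroederSeq θ p (m + 1) * schroederSeq θ p m * schroederSeq θ p n := by rw [hsucc]
      _ = _ := by rw [mul_assoc, ih, hsucc]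

lemma IsJordanStarIsoOn.isCentralProjection_schroederDiff
    (hθ : IsJordanStarIsoOn (corner M 1) (corner M r) θ) (hr : IsCentralProjection M r)
    (hp : IsCentralProjection M p) (hrp : r * p = r) (n : ℕ) :
    IsCentralProjection M (schroederDiff θ p n) :=
  (hθ.isCentralProjection_schroederSeq hr hp n).sub
    (hθ.isCentralProjection_schroederSeq hr hp (n + 1)) (hθ.schroederSeq_succ_mul hr hp hrp n)

lemma IsJordanStarIsoOn.schroederDiff_mul_eq_zero
    (hθ : IsJordanStarIsoOn (corner M 1) (corner M r) θ) (hr : IsCentralProjection M r)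
    (hp : IsCentralProjection M p) (hrp : r * p = r) {n m : ℕ} (hnm : n < m) :
    schroederDiff θ p n * schroederDiff θ p m = 0 := by
  have he := hθ.isCentralProjection_schroederSeq hr hp
  have hle := fun {a b : ℕ} (h : a ≤ b) => ((he a).mul_comm (he b).mem).trans
    (hθ.schroederSeq_mul_of_le hr hp hrp h)
  simp only [schroederDiff, sub_mul, mul_sub, hle hnm.le, hle hnm, hle (Nat.succ_le_succ hnm.le),
    hle (Nat.le_succ_of_le hnm.le)]
  abel

lemma IsJordanStarIsoOn.map_schroederDiff
    (hθ : IsJordanStarIsoOn (corner M 1) (corner M r) θ) (hr : IsCentralProjection M r)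
    (hp : IsCentralProjection M p) (hrp : r * p = r) (n : ℕ) :
    θ (schroederDiff θ p n) = schroederDiff θ p (n + 2) :=
  hθ.map_sub (mem_corner_one (hθ.isCentralProjection_schroederSeq hr hp (n + 1)).mem)
    (mem_corner_one (hθ.isCentralProjection_schroederDiff hr hp hrp n).mem)

lemma IsJordanStarIsoOn.exists_isCentralProjection_map_add_one_sub_eq
    (hθ : IsJordanStarIsoOn (corner M 1) (corner M r) θ) (hr : IsCentralProjection M r)
    (hp : IsCentralProjection M p) (hrp : r * p = r) :
    ∃ g, IsCentralProjection M g ∧ θ g * g = θ g ∧ θ g + (1 - g) = p := by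
  set f := schroederDiff θ p
  have hf := hθ.isCentralProjection_schroederDiff hr hp hrp
  have horth := fun {n m : ℕ} (h : n < m) => hθ.schroederDiff_mul_eq_zero hr hp hrp h
  have hθf := hθ.map_schroederDiff hr hp hrp
  obtain ⟨G, hG, hGf, hG_min⟩ := IsCentralProjection.exists_iSup fun k => hf (2 * k + 2)
  have hf0G : f 0 * G = 0 := by
    have h := hG_min (1 - f 0) fun k => by rw [sub_mul, one_mul, horth (by omega), sub_zero]
    rwa [sub_mul, one_mul, sub_eq_self] at h
  have hGf0 : G * f 0 = 0 := (hG.mul_comm (hf 0).mem).trans hf0G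
  have hg := (hf 0).add hG hf0G
  have hgf : ∀ k, (f 0 + G) * f (2 * k) = f (2 * k)
    | 0 => by rw [add_mul, (hf 0).mul_self, hGf0, add_zero]
    | k + 1 => by rw [add_mul, horth (by omega), zero_add]; exact hGf k
  have hθg : θ (f 0 + G) = G := by
    refine hθ.map_eq_of_isSup hr (F := fun k => f (2 * k)) (fun k => hf _) hg hgf
      (fun z _ hz => ?_) hG (fun k => by rw [hθf]; exact hGf k)
      (fun z hz => hG_min z fun k => by rw [← hθf]; exact hz k)
    rw [mul_add, hz 0, hG_min z fun k => hz (k + 1)]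
  refine ⟨f 0 + G, hg, by rw [hθg, mul_add, hGf0, hG.mul_self, zero_add], ?_⟩
  rw [hθg]
  change G + (1 - (1 - p + G)) = p
  abel

lemma IsJordanStarIsoOn.exists_corner_of_le
    (hθ : IsJordanStarIsoOn (corner M 1) (corner M r) θ) (hr : IsCentralProjection M r)
    (hp : IsCentralProjection M p) (hrp : r * p = r) :
    ∃ J, IsJordanStarIsoOn (corner M 1) (corner M p) J := by
  obtain ⟨g, hg, hθg, hp_eq⟩ := hθ.exists_isCentralProjection_map_add_one_sub_eq hr hp hrp
  have h1g := IsCentralProjection.one.sub hg (mul_one g)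
  have hJ := (hθ.restrict_corner IsCentralProjection.one hr hg (mul_one g)).corner_add
    IsJordanStarIsoOn.id hg h1g (hθ.isCentralProjection_map_one hr hg).1 h1g
    (by rw [mul_sub, mul_one, hg.mul_self, sub_self]) (by rw [mul_sub, mul_one, hθg, sub_self])
  rw [add_sub_cancel, hp_eq] at hJ
  exact ⟨_, hJ⟩

end SchroederBernstein

/-- If `M` is Jordan `*`-isomorphic to a direct summand of `N` and `N` is Jordan
`*`-isomorphic to a direct summand of `M`, then `M` and `N` are Jordan
`*`-isomorphic. -/
theorem stmt_13 {H : Type*} [NormedAddCommGroup H] [InnerProductSpace ℂ H] [CompleteSpace H]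
    {K : Type*} [NormedAddCommGroup K] [InnerProductSpace ℂ K] [CompleteSpace K]
    (M : VonNeumannAlgebra H) (N : VonNeumannAlgebra K)
    (p : H →L[ℂ] H) (q : K →L[ℂ] K)
    (hp : IsCentralProjection M p) (hq : IsCentralProjection N q)
    (h1 : ∃ J : (H →L[ℂ] H) → (K →L[ℂ] K),
      IsJordanStarIsoOn {x | x ∈ M} {y | ∃ x ∈ N, y = x * q} J)
    (h2 : ∃ J : (K →L[ℂ] K) → (H →L[ℂ] H),
      IsJordanStarIsoOn {x | x ∈ N} {y | ∃ x ∈ M, y = x * p} J) :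
    ∃ J : (H →L[ℂ] H) → (K →L[ℂ] K), IsJordanStarIsoOn {x | x ∈ M} {y | y ∈ N} J := by
  obtain ⟨Φ, hΦ⟩ := h1
  obtain ⟨Ψ, hΨ⟩ := h2
  simp only [← corner_one] at hΦ hΨ ⊢
  have hΨq := hΨ.restrict_corner IsCentralProjection.one hp hq (mul_one q)
  obtain ⟨hr, hrp, -⟩ := hΨ.isCentralProjection_map_one hp hq
  obtain ⟨J, hJ⟩ := (hΦ.comp hΨq).exists_corner_of_le hr hp hrp
  exact ⟨_, hJ.comp (hΨ.invFunOn_corner IsCentralProjection.one)⟩
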